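/- Let φ : ℝ → ℝ be C² and bounded, with |φ| ≤ M, let 0 ≤ ξ ≤ 1/4, and let f : ℝ → ℝ be C² with compact support. Then ∫ ((1−2ξ)(φ')² − 2ξ φ φ'') f² dλ ≥ −2ξ M² ∫ (f')² dλ. -/

import Mathlib

open MeasureTheory

/-!
Integrating by parts, `-2ξ ∫ φ φ'' f² = 2ξ ∫ (φ' f)² + 4ξ ∫ (φ f') (φ' f)`, so the left-hand side
equals `∫ p² + 4ξ p q` with `p = φ' f` and `q = φ f'`. Completing the square,
`p² + 4ξ p q ≥ -4ξ² q² ≥ -2ξ q²` for `0 ≤ ξ ≤ 1/2`, and `q² ≤ M² f'²`.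
-/

theorem HasCompactSupport.integral_deriv_eq_zero {E : Type*} [NormedAddCommGroup E]
    [NormedSpace ℝ E] [CompleteSpace E] {u : ℝ → E} (hu : ContDiff ℝ 1 u)
    (huc : HasCompactSupport u) : ∫ x, deriv u x = 0 := by
  have hint : Integrable (deriv u) :=
    (hu.continuous_deriv le_rfl).integrable_of_hasCompactSupport huc.deriv
  rw [← intervalIntegral.integral_Iic_add_Ioi (b := 0) hint.integrableOn hint.integrableOn,
    huc.integral_Iic_deriv_eq hu, huc.integral_Ioi_deriv_eq hu, add_neg_cancel]

theorem neg_two_mul_mul_sq_le_sq_add {ξ : ℝ} (hξ0 : 0 ≤ ξ) (hξ1 : ξ ≤ 1 / 2) (p q : ℝ) :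
    -2 * ξ * q ^ 2 ≤ p ^ 2 + 4 * ξ * p * q := by
  nlinarith [sq_nonneg (p + 2 * ξ * q), mul_nonneg (mul_nonneg hξ0 (sq_nonneg q))
    (by linarith : (0 : ℝ) ≤ 1 - 2 * ξ)]

-- The subtracted term is `(φ φ' f²)'`, whose integral vanishes.
theorem neg_two_mul_sq_sub_le_of_abs_le {ξ M φ φ₁ φ₂ f f₁ : ℝ} (hξ0 : 0 ≤ ξ) (hξ1 : ξ ≤ 1 / 2)
    (hφ : |φ| ≤ M) :
    -2 * ξ * M ^ 2 * f₁ ^ 2 - 2 * ξ * ((φ₁ * φ₁ + φ * φ₂) * f ^ 2 + φ * φ₁ * (2 * f * f₁))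
      ≤ ((1 - 2 * ξ) * φ₁ ^ 2 - 2 * ξ * φ * φ₂) * f ^ 2 := by
  have hsq : φ ^ 2 ≤ M ^ 2 := sq_le_sq' (neg_le_of_abs_le hφ) (le_of_abs_le hφ)
  nlinarith [neg_two_mul_mul_sq_le_sq_add hξ0 hξ1 (φ₁ * f) (φ * f₁),
    mul_le_mul_of_nonneg_left hsq (mul_nonneg hξ0 (sq_nonneg f₁))]

theorem hasDerivAt_mul_deriv_mul_sq {φ f : ℝ → ℝ} {x : ℝ} (hφ : DifferentiableAt ℝ φ x)
    (hφ' : DifferentiableAt ℝ (deriv φ) x) (hf : DifferentiableAt ℝ f x) :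
    HasDerivAt (fun l => φ l * deriv φ l * f l ^ 2)
      ((deriv φ x * deriv φ x + φ x * deriv (deriv φ) x) * f x ^ 2
        + φ x * deriv φ x * (2 * f x * deriv f x)) x :=
  ((hφ.hasDerivAt.mul hφ'.hasDerivAt).mul (hf.hasDerivAt.pow 2)).congr_deriv (by norm_num)

theorem stmt_4 (φ : ℝ → ℝ) (hφ : ContDiff ℝ 2 φ) (M : ℝ) (hM : ∀ l, |φ l| ≤ M)
    (ξ : ℝ) (hξ0 : 0 ≤ ξ) (hξ1 : ξ ≤ 1/4)
    (f : ℝ → ℝ) (hf : ContDiff ℝ 2 f) (hfc : HasCompactSupport f) :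
    (∫ l : ℝ, ((1 - 2*ξ) * (deriv φ l)^2 - 2 * ξ * φ l * deriv (deriv φ) l) * (f l)^2)
      ≥ -2 * ξ * M^2 * ∫ l : ℝ, (deriv f l)^2 := by
  obtain ⟨hφd, -, hφ'⟩ := (contDiff_succ_iff_deriv (n := 1)).mp hφ
  obtain ⟨hfd, -, hf'⟩ := (contDiff_succ_iff_deriv (n := 1)).mp hf
  set u : ℝ → ℝ := fun l => φ l * deriv φ l * f l ^ 2
  have hf2c : HasCompactSupport fun l => f l ^ 2 := hfc.comp_left (zero_pow two_ne_zero)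
  have hu : ContDiff ℝ 1 u := ((hφ.of_le one_le_two).mul hφ').mul ((hf.of_le one_le_two).pow 2)
  have huc : HasCompactSupport u := hf2c.mul_left
  have hdu : Integrable (deriv u) :=
    (hu.continuous_deriv le_rfl).integrable_of_hasCompactSupport huc.deriv
  have hf'sq : Integrable fun l => deriv f l ^ 2 :=
    (hf'.continuous.pow 2).integrable_of_hasCompactSupport
      (hfc.deriv.comp_left (zero_pow two_ne_zero))
  have hlhs : Integrable fun l =>
      ((1 - 2*ξ) * (deriv φ l)^2 - 2 * ξ * φ l * deriv (deriv φ) l) * (f l)^2 := by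
    have := hφ'.continuous_deriv le_rfl
    exact Continuous.integrable_of_hasCompactSupport (by fun_prop) hf2c.mul_left
  calc -2 * ξ * M^2 * ∫ l, (deriv f l)^2
      = ∫ l, -2 * ξ * M ^ 2 * deriv f l ^ 2 - 2 * ξ * deriv u l := by
        rw [integral_sub (hf'sq.const_mul _) (hdu.const_mul _), integral_const_mul,
          integral_const_mul, huc.integral_deriv_eq_zero hu, mul_zero, sub_zero]
    _ ≤ _ := integral_mono ((hf'sq.const_mul _).sub (hdu.const_mul _)) hlhs fun l => by
        rw [(hasDerivAt_mul_deriv_mul_sq (hφd l) (hφ'.differentiable one_ne_zero l)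
          (hfd l)).deriv]
        exact neg_two_mul_sq_sub_le_of_abs_le hξ0 (by linarith) (hM l)
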